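/- arXiv:1711.01541 — 3 statements merged into one kernel-verified Lean document; each statement's English description precedes it below -/
import Mathlib

section
/- Let n ≥ 1, let M be an s × t matrix with entries in ℤ/nℤ, with rows m₁, …, m_s, and let c ∈ (ℤ/nℤ)^s be a column vector with entries c₁, …, c_s. Then the equation M·x = c has no solution x ∈ (ℤ/nℤ)^t if and only if there exist b₁, …, b_s ∈ ℤ/nℤ such that the linear combination Σᵢ bᵢ·mᵢ of the rows of M is the zero row vector while Σᵢ bᵢ·cᵢ ≠ 0 in ℤ/nℤ. -/
/-!
`M x = c` is insoluble iff `c` is nonzero in the cokernel of `M`, and a row vector `b` as in the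
statement is exactly a functional on `(ZMod n)^s` killing the columns of `M` but not `c`. So it
suffices that functionals on `ZMod n`-modules separate points. This holds because `ZMod n` is
self-injective: by Baer's criterion for the principal ideal ring `ZMod n` one needs `a ∣ y`
whenever every annihilator of `a` annihilates `y`, which comes from `a * a⁻¹ = gcd (a.val, n)`.
For `q ≠ 0` the cyclic module `R ∙ q ≅ R ⧸ (a)` has `a` a non-unit, hence a zero divisor of the
finite ring `R`, which yields a nonzero map `R ⧸ (a) → R`; injectivity of `R` extends it.
-/

open Matrix

instance ZMod.isPrincipalIdealRing (n : ℕ) : IsPrincipalIdealRing (ZMod n) :=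
  .of_surjective (Int.castRingHom (ZMod n)) ZMod.intCast_surjective

theorem ZMod.dvd_of_forall_mul_eq_zero {n : ℕ} [NeZero n] {a y : ZMod n}
    (h : ∀ r : ZMod n, r * a = 0 → r * y = 0) : a ∣ y := by
  set d := a.val.gcd n
  have hdn : d ∣ n := Nat.gcd_dvd_right _ _
  have hd : 0 < n / d :=
    Nat.div_pos (Nat.le_of_dvd (NeZero.pos n) hdn) (Nat.gcd_pos_of_pos_right _ (NeZero.pos n))
  have hka : ((n / d : ℕ) : ZMod n) * a = 0 := by
    obtain ⟨k, hk⟩ := Nat.gcd_dvd_left a.val n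
    rw [← ZMod.natCast_zmod_val a, ← Nat.cast_mul, ZMod.natCast_eq_zero_iff, hk, ← mul_assoc,
      Nat.div_mul_cancel hdn]
    exact dvd_mul_right n k
  have hdy : d ∣ y.val := by
    have hky := h _ hka
    rw [← ZMod.natCast_zmod_val y, ← Nat.cast_mul, ZMod.natCast_eq_zero_iff] at hky
    refine Nat.dvd_of_mul_dvd_mul_left hd ?_
    rwa [Nat.div_mul_cancel hdn]
  obtain ⟨m, hm⟩ := hdy
  refine ⟨a⁻¹ * m, ?_⟩
  rw [← mul_assoc, ZMod.mul_inv_eq_gcd, ← Nat.cast_mul, ← hm, ZMod.natCast_zmod_val]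

theorem Module.Baer.self_of_forall_dvd {R : Type*} [CommRing R] [IsPrincipalIdealRing R]
    (h : ∀ a y : R, (∀ r : R, r * a = 0 → r * y = 0) → a ∣ y) : Module.Baer R R := by
  intro I g
  obtain ⟨a, rfl⟩ : ∃ a : R, I = Ideal.span {a} :=
    ⟨_, (Submodule.IsPrincipal.span_singleton_generator I).symm⟩
  have ha : a ∈ Ideal.span {a} := Ideal.mem_span_singleton_self a
  obtain ⟨z, hz⟩ : a ∣ g ⟨a, ha⟩ := h _ _ fun r hr => by
    have hra : r • (⟨a, ha⟩ : Ideal.span {a}) = 0 := Subtype.ext hr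
    rw [← smul_eq_mul, ← map_smul, hra, map_zero]
  refine ⟨LinearMap.toSpanSingleton R R z, fun x hx => ?_⟩
  obtain ⟨r, rfl⟩ := Ideal.mem_span_singleton'.mp hx
  have hrx : (⟨r * a, hx⟩ : Ideal.span {a}) = r • ⟨a, ha⟩ := rfl
  rw [hrx, map_smul, hz, LinearMap.toSpanSingleton_apply, smul_eq_mul, smul_eq_mul, mul_assoc]

theorem ZMod.baer_self (n : ℕ) [NeZero n] : Module.Baer (ZMod n) (ZMod n) :=
  Module.Baer.self_of_forall_dvd fun _ _ => ZMod.dvd_of_forall_mul_eq_zero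

namespace Module.Baer

variable {R : Type*} [CommRing R] [Finite R] [IsPrincipalIdealRing R] (hR : Module.Baer R R)
include hR

theorem exists_dual_apply_ne_zero {Q : Type*} [AddCommGroup Q] [Module R Q] {q : Q}
    (hq : q ≠ 0) : ∃ ℓ : Module.Dual R Q, ℓ q ≠ 0 := by
  set I : Ideal R := Ideal.torsionOf R Q q
  obtain ⟨a, hI⟩ : ∃ a : R, I = Ideal.span {a} :=
    ⟨_, (Submodule.IsPrincipal.span_singleton_generator I).symm⟩
  have ha : ¬IsUnit a := fun ha => hq <| by
    rw [← Ideal.torsionOf_eq_top_iff R, ← Ideal.span_singleton_eq_top.2 ha, ← hI]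
  obtain ⟨w, hwa, hw⟩ : ∃ w, a * w = 0 ∧ w ≠ 0 := by
    simpa [isUnit_iff_mem_nonZeroDivisors_of_finite, mem_nonZeroDivisors_iff_left] using ha
  have hIw : I ≤ LinearMap.ker (LinearMap.toSpanSingleton R R w) := by
    rw [hI, Ideal.span_le, Set.singleton_subset_iff]
    exact hwa
  let i := I.liftQ (LinearMap.toSpanSingleton R Q q) le_rfl
  obtain ⟨ℓ, hℓ⟩ := hR.extension_property i
    (LinearMap.ker_eq_bot.1 (Submodule.ker_liftQ_eq_bot _ _ _ le_rfl)) (I.liftQ _ hIw)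
  refine ⟨ℓ, ?_⟩
  have hi : i (Submodule.Quotient.mk 1) = q := one_smul R q
  rw [← hi, ← LinearMap.comp_apply, hℓ, Submodule.liftQ_apply, LinearMap.toSpanSingleton_apply,
    one_smul]
  exact hw

theorem exists_dual_comp_eq_zero_apply_ne_zero {M N : Type*} [AddCommGroup M] [Module R M]
    [AddCommGroup N] [Module R N] (f : M →ₗ[R] N) {c : N} (hc : c ∉ LinearMap.range f) :
    ∃ φ : Module.Dual R N, φ ∘ₗ f = 0 ∧ φ c ≠ 0 := by
  obtain ⟨ℓ, hℓ⟩ := hR.exists_dual_apply_ne_zero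
    (mt (Submodule.Quotient.mk_eq_zero (LinearMap.range f)).1 hc)
  refine ⟨ℓ ∘ₗ (LinearMap.range f).mkQ, ?_, hℓ⟩
  rw [LinearMap.comp_assoc, LinearMap.range_mkQ_comp, LinearMap.comp_zero]

theorem not_exists_mulVec_eq_iff {m k : Type*} [Fintype m] [Fintype k] (A : Matrix m k R)
    (c : m → R) : (¬ ∃ x, A *ᵥ x = c) ↔ ∃ b, b ᵥ* A = 0 ∧ b ⬝ᵥ c ≠ 0 := by
  classical
  constructor
  · intro hc
    obtain ⟨φ, hφA, hφc⟩ := hR.exists_dual_comp_eq_zero_apply_ne_zero A.mulVecLin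
      (c := c) fun ⟨x, hx⟩ => hc ⟨x, hx⟩
    have hφ v : φ v = LinearEquiv.piRing R R m R φ ⬝ᵥ v := by
      conv_lhs => rw [← (LinearEquiv.piRing R R m R).symm_apply_apply φ]
      simp only [LinearEquiv.piRing_symm_apply, dotProduct, smul_eq_mul, mul_comm]
    refine ⟨_, funext fun j => ?_, by rwa [← hφ]⟩
    have hφj := congr($hφA (Pi.single j 1))
    rwa [LinearMap.comp_apply, mulVecLin_apply, hφ, dotProduct_mulVec,
      dotProduct_single_one] at hφj
  · rintro ⟨b, hbA, hbc⟩ ⟨x, rfl⟩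
    exact hbc (by rw [dotProduct_mulVec, hbA, zero_dotProduct])

end Module.Baer

/-- **Lemma 5 (paper), matrix form.** Let `n ≥ 1`, let `M` be an `s × t` matrix over
`ℤ/nℤ` and `c ∈ (ℤ/nℤ)^s`. The equation `M·x = c` has no solution `x ∈ (ℤ/nℤ)^t`
if and only if there are `b₁, …, b_s ∈ ℤ/nℤ` with `Σᵢ bᵢ·mᵢ = 0` (as a row vector)
but `Σᵢ bᵢ·cᵢ ≠ 0`. -/
theorem no_solution_iff_row_combination (n s t : ℕ) (hn : 1 ≤ n)
    (M : Matrix (Fin s) (Fin t) (ZMod n)) (c : Fin s → ZMod n) :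
    (¬ ∃ x : Fin t → ZMod n, M.mulVec x = c) ↔
      ∃ b : Fin s → ZMod n,
        (∀ j : Fin t, ∑ i : Fin s, b i * M i j = 0) ∧ ∑ i : Fin s, b i * c i ≠ 0 := by
  have : NeZero n := ⟨by omega⟩
  simpa only [funext_iff, vecMul, dotProduct, Pi.zero_apply] using
    Module.Baer.not_exists_mulVec_eq_iff (ZMod.baer_self n) M c
end

section
/- Let n ≥ 1, let V be a finite abelian group whose exponent divides n, let φ₁, …, φ_m : V → ℤ/nℤ be group homomorphisms, and let c₁, …, c_m ∈ ℤ/nℤ. Then there is no x ∈ V with φᵢ(x) = cᵢ for all i = 1, …, m if and only if there exist b₁, …, b_m ∈ ℤ/nℤ such that the homomorphism Σᵢ bᵢ·φᵢ : V → ℤ/nℤ is identically zero while Σᵢ bᵢ·cᵢ ≠ 0 in ℤ/nℤ. -/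
/-!
If `c` is not in the image of `Φ = (φᵢ)ᵢ : V → (ℤ/n)ᵐ`, its class in the quotient `(ℤ/n)ᵐ / im Φ`
is nonzero, so some character of this quotient into `ℚ/ℤ` does not vanish on it. The quotient is
killed by `n`, hence the character takes values in the `n`-torsion of `ℚ/ℤ`, which is `ℤ/n`. The
resulting functional on `(ℤ/n)ᵐ` kills `im Φ` but not `c`, and its values `bᵢ` on the standard
basis are the required coefficients.
-/

namespace ZMod

noncomputable def toRatAddCircle (n : ℕ) : ZMod n →+ AddCircle (1 : ℚ) :=
  ZMod.lift n ⟨CharacterModule.int.divByNat n, CharacterModule.int.divByNat_self n⟩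

lemma toRatAddCircle_intCast (n : ℕ) (k : ℤ) :
    toRatAddCircle n k = ((k / n : ℚ) : AddCircle (1 : ℚ)) := by
  rw [toRatAddCircle, ZMod.lift_coe]
  change k • (((n : ℚ)⁻¹ : ℚ) : AddCircle (1 : ℚ)) = _
  rw [← AddCircle.coe_zsmul, zsmul_eq_mul, div_eq_mul_inv]

lemma toRatAddCircle_injective (n : ℕ) [NeZero n] : Function.Injective (toRatAddCircle n) := by
  rw [injective_iff_map_eq_zero]
  intro a ha
  obtain ⟨k, rfl⟩ := ZMod.intCast_surjective a
  rw [toRatAddCircle_intCast, AddCircle.coe_eq_zero_iff] at ha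
  obtain ⟨j, hj⟩ := ha
  have hn : (n : ℚ) ≠ 0 := Nat.cast_ne_zero.mpr (NeZero.ne n)
  rw [zsmul_eq_mul, mul_one, eq_div_iff hn] at hj
  rw [ZMod.intCast_zmod_eq_zero_iff_dvd]
  exact ⟨j, by exact_mod_cast hj.symm.trans (mul_comm _ _)⟩

lemma mem_range_toRatAddCircle_iff {n : ℕ} [NeZero n] {u : AddCircle (1 : ℚ)} :
    u ∈ (toRatAddCircle n).range ↔ n • u = 0 := by
  refine ⟨?_, fun hu => ?_⟩
  · rintro ⟨a, rfl⟩
    rw [← map_nsmul, nsmul_eq_mul, ZMod.natCast_self, zero_mul, map_zero]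
  · obtain ⟨m, -, rfl⟩ := (AddCircle.nsmul_eq_zero_iff (NeZero.pos n)).mp hu
    exact ⟨m, by simpa using toRatAddCircle_intCast n m⟩

end ZMod

lemma AddCommGroup.exists_addMonoidHom_zmod_apply_ne_zero {n : ℕ} [NeZero n] {Q : Type*}
    [AddCommGroup Q] (hQ : ∀ x : Q, n • x = 0) {q : Q} (hq : q ≠ 0) :
    ∃ ψ : Q →+ ZMod n, ψ q ≠ 0 := by
  obtain ⟨χ, hχ⟩ := CharacterModule.exists_character_apply_ne_zero_of_ne_zero hq
  have hχ_range (x : Q) : χ x ∈ (ZMod.toRatAddCircle n).range :=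
    ZMod.mem_range_toRatAddCircle_iff.mpr (by rw [← map_nsmul, hQ, map_zero])
  let e := AddMonoidHom.ofInjective (ZMod.toRatAddCircle_injective n)
  refine ⟨e.symm.toAddMonoidHom.comp ((χ : Q →+ AddCircle (1 : ℚ)).codRestrict _ hχ_range), ?_⟩
  intro h
  rw [AddMonoidHom.comp_apply, AddEquiv.coe_toAddMonoidHom, AddEquiv.map_eq_zero_iff] at h
  exact hχ (congrArg Subtype.val h)

lemma AddSubgroup.exists_addMonoidHom_zmod_eq_zero_of_notMem {n : ℕ} [NeZero n] {M : Type*}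
    [AddCommGroup M] (hM : ∀ x : M, n • x = 0) {W : AddSubgroup M} {c : M} (hc : c ∉ W) :
    ∃ Ψ : M →+ ZMod n, (∀ w ∈ W, Ψ w = 0) ∧ Ψ c ≠ 0 := by
  have hQ (q : M ⧸ W) : n • q = 0 := by
    induction q using QuotientAddGroup.induction_on with
    | H x => rw [← QuotientAddGroup.mk_nsmul, hM, QuotientAddGroup.mk_zero]
  have hc' : (c : M ⧸ W) ≠ 0 := by rwa [Ne, QuotientAddGroup.eq_zero_iff]
  obtain ⟨ψ, hψ⟩ := AddCommGroup.exists_addMonoidHom_zmod_apply_ne_zero hQ hc'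
  refine ⟨ψ.comp (QuotientAddGroup.mk' W), fun w hw => ?_, hψ⟩
  rw [AddMonoidHom.comp_apply, QuotientAddGroup.mk'_apply,
    (QuotientAddGroup.eq_zero_iff w).mpr hw, map_zero]

lemma AddMonoidHom.zmod_pi_apply_eq_sum_univ {n : ℕ} {ι : Type*} [Fintype ι] [DecidableEq ι]
    (Ψ : (ι → ZMod n) →+ ZMod n) (v : ι → ZMod n) :
    Ψ v = ∑ i, Ψ (Pi.single i 1) * v i := by
  rw [← Ψ.coe_toZModLinearMap n, LinearMap.pi_apply_eq_sum_univ]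
  refine Finset.sum_congr rfl fun i _ => ?_
  rw [smul_eq_mul, mul_comm]
  congr 2
  ext j
  simp [Pi.single_apply, eq_comm]

theorem no_solution_iff_combination_of_homs_general (n : ℕ) (hn : 1 ≤ n)
    (V : Type*) [AddCommGroup V]
    (m : ℕ) (φ : Fin m → (V →+ ZMod n)) (c : Fin m → ZMod n) :
    (¬ ∃ x : V, ∀ i : Fin m, φ i x = c i) ↔
      ∃ b : Fin m → ZMod n,
        (∀ x : V, ∑ i : Fin m, b i * φ i x = 0) ∧ ∑ i : Fin m, b i * c i ≠ 0 := by
  have : NeZero n := ⟨by omega⟩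
  constructor
  · intro hno
    have hc : c ∉ (AddMonoidHom.pi φ).range := fun ⟨x, hx⟩ => hno ⟨x, fun i => congrFun hx i⟩
    have hM (v : Fin m → ZMod n) : n • v = 0 := by ext i; simp
    obtain ⟨Ψ, hΨ, hΨc⟩ := AddSubgroup.exists_addMonoidHom_zmod_eq_zero_of_notMem hM hc
    refine ⟨fun i => Ψ (Pi.single i 1), fun x => ?_, ?_⟩
    · exact Ψ.zmod_pi_apply_eq_sum_univ _ ▸ hΨ _ ⟨x, rfl⟩
    · exact Ψ.zmod_pi_apply_eq_sum_univ c ▸ hΨc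
  · rintro ⟨b, hb, hbc⟩ ⟨x, hx⟩
    exact hbc (by simpa only [hx] using hb x)

/-- **Lemma 5 (paper), as applied in the proof of Theorem 4.** Let `n ≥ 1`, let `V` be a
finite abelian group whose exponent divides `n`, let `φ₁, …, φ_m : V → ℤ/nℤ` be group
homomorphisms and `c₁, …, c_m ∈ ℤ/nℤ`. There is no `x ∈ V` with `φᵢ(x) = cᵢ` for all `i`
if and only if there are `b₁, …, b_m ∈ ℤ/nℤ` such that `Σᵢ bᵢ·φᵢ` is the zero homomorphism
while `Σᵢ bᵢ·cᵢ ≠ 0`. -/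
theorem no_solution_iff_combination_of_homs (n : ℕ) (hn : 1 ≤ n)
    (V : Type*) [AddCommGroup V] [Fintype V] (hexp : ∀ x : V, n • x = 0)
    (m : ℕ) (φ : Fin m → (V →+ ZMod n)) (c : Fin m → ZMod n) :
    (¬ ∃ x : V, ∀ i : Fin m, φ i x = c i) ↔
      ∃ b : Fin m → ZMod n,
        (∀ x : V, ∑ i : Fin m, b i * φ i x = 0) ∧ ∑ i : Fin m, b i * c i ≠ 0 :=
  no_solution_iff_combination_of_homs_general n hn V m φ c
end

section
/- Let G be a torsion abelian group such that for every integer n ≥ 1 the n-torsion subgroup G[n] = {g ∈ G : n·g = 0} is finite. Then the subgroup ⋂_{n≥1} nG of divisible elements of G is itself a divisible group; consequently it coincides with the maximal divisible subgroup of G. -/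
/-
If `g` is divisible but no solution of `m • e = g` were divisible, each of the finitely many
solutions `e` would avoid `kₑ • G` for some `kₑ ≥ 1`. Writing `g = (m * N) • h` with `N = ∏ kₑ`,
the solution `N • h` lies in every `kₑ • G`, a contradiction. Finiteness of the solution set
comes from finiteness of `G[m]`, since the solutions form a coset of it.
-/

/-- The set of divisible elements of an abelian group `G`: those `g` lying in `nG` for
every `n ≥ 1`. -/
def divisibleElements (G : Type*) [AddCommGroup G] : Set G :=
  {g : G | ∀ n : ℕ, 1 ≤ n → ∃ h : G, n • h = g}

section

variable {G : Type*} [AddCommGroup G]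

theorem finite_setOf_nsmul_eq {m : ℕ} (hfin : {x : G | m • x = 0}.Finite) (g : G) :
    {e : G | m • e = g}.Finite := by
  rcases Set.eq_empty_or_nonempty {e : G | m • e = g} with hempty | ⟨e₀, he₀⟩
  · simp [hempty]
  · refine (hfin.image (e₀ + ·)).subset fun e he => ⟨e - e₀, ?_, add_sub_cancel e₀ e⟩
    simp only [Set.mem_ofPred_eq] at he he₀ ⊢
    rw [smul_sub, he, he₀, sub_self]

theorem exists_mem_divisibleElements_nsmul_eq {g : G} (hg : g ∈ divisibleElements G)
    {m : ℕ} (hm : 1 ≤ m) (hS : {e : G | m • e = g}.Finite) :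
    ∃ e ∈ divisibleElements G, m • e = g := by
  by_contra! hcon
  have hnot : ∀ e ∈ hS.toFinset, ∃ k : ℕ, 1 ≤ k ∧ ∀ h : G, k • h ≠ e := by
    intro e he
    rw [Set.Finite.mem_toFinset] at he
    simpa [divisibleElements] using mt (hcon e) (not_not.mpr he)
  choose! k hk1 hk using hnot
  obtain ⟨h, hh⟩ := hg (m * ∏ e ∈ hS.toFinset, k e) (Nat.mul_pos hm (Finset.prod_pos hk1))
  have hmem : (∏ e ∈ hS.toFinset, k e) • h ∈ hS.toFinset := by
    rwa [Set.Finite.mem_toFinset, Set.mem_ofPred_eq, ← mul_smul]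
  obtain ⟨c, hc⟩ := Finset.dvd_prod_of_mem k hmem
  exact hk _ hmem (c • h) (by rw [← mul_smul, ← hc])

end

theorem divisibleElements_divisible_of_torsion_of_finite_general (G : Type*) [AddCommGroup G]
    (hfin : ∀ m : ℕ, 1 ≤ m → {g : G | m • g = 0}.Finite) :
    (∀ g ∈ divisibleElements G, ∀ m : ℕ, 1 ≤ m →
        ∃ e ∈ divisibleElements G, m • e = g) ∧
    (∀ H : AddSubgroup G, (∀ h ∈ H, ∀ m : ℕ, 1 ≤ m → ∃ e ∈ H, m • e = h) →
        (H : Set G) ⊆ divisibleElements G) := by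
  refine ⟨fun g hg m hm =>
    exists_mem_divisibleElements_nsmul_eq hg hm (finite_setOf_nsmul_eq (hfin m hm) g), ?_⟩
  intro H hH g hg n hn
  obtain ⟨e, -, he⟩ := hH g hg n hn
  exact ⟨e, he⟩

/-- Let `G` be a torsion abelian group all of whose `n`-torsion subgroups are finite.
Then the subgroup `⋂_{n≥1} nG` of divisible elements of `G` is itself a divisible group;
consequently it coincides with the maximal divisible subgroup of `G` (i.e. it is divisible
and contains every divisible subgroup of `G`). -/
theorem divisibleElements_divisible_of_torsion_of_finite (G : Type*) [AddCommGroup G]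
    (htors : ∀ g : G, ∃ m : ℕ, 1 ≤ m ∧ m • g = 0)
    (hfin : ∀ m : ℕ, 1 ≤ m → {g : G | m • g = 0}.Finite) :
    (∀ g ∈ divisibleElements G, ∀ m : ℕ, 1 ≤ m →
        ∃ e ∈ divisibleElements G, m • e = g) ∧
    (∀ H : AddSubgroup G, (∀ h ∈ H, ∀ m : ℕ, 1 ≤ m → ∃ e ∈ H, m • e = h) →
        (H : Set G) ⊆ divisibleElements G) :=
  divisibleElements_divisible_of_torsion_of_finite_general G hfin
end
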